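/- arXiv:2009.06582 — 3 statements merged into one kernel-verified Lean document; each statement's English description precedes it below -/
import Mathlib

section
/- Let A be an invertible (n+1)×(n+1) real matrix and K ≥ 1. Regard the box B = [-1,1]^n as a subset of projective space RP^n via the affine chart x ↦ [x:1]. If the projective transformation [A] maps B into K·B = [-K,K]^n, then for all indices i, j one has |A_{ij}| ≤ 2K·|A_{n+1,n+1}|. -/
/-!
Write `c = A (last) (last)`. Along the segment `t ↦ [t e_j : 1]`, `|t| ≤ 1`, of the box the
denominator `t A(last, j) + c` never vanishes, which forces `|A(last, j)| ≤ |c|`. The box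
condition says that every coordinate of `A (x, 1)` is at most `K` times the last one in absolute
value; at `x = 0` this bounds the last column by `K |c|`, and adding the cases `x = ±e_j` gives
`2 |A(i, j)| ≤ K (|c + A(last, j)| + |c - A(last, j)|) = 2 K |c|`. Hence in fact `|A i j| ≤ K |c|`.
-/

open Matrix

lemma abs_le_abs_of_forall_mul_add_ne_zero {a c : ℝ}
    (h : ∀ t : ℝ, |t| ≤ 1 → t * a + c ≠ 0) : |a| ≤ |c| := by
  by_contra! hlt
  have ha : a ≠ 0 := by
    rintro rfl
    exact (abs_nonneg c).not_gt (by simpa using hlt)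
  refine h (-c / a) ?_ (by field_simp; ring)
  rw [abs_div, abs_neg, div_le_one (abs_pos.mpr ha)]
  exact hlt.le

lemma abs_add_add_abs_neg_add_of_abs_le {a c : ℝ} (h : |a| ≤ |c|) :
    |a + c| + |-a + c| = 2 * |c| := by
  rcases le_total 0 c with hc | hc
  · obtain ⟨h₁, h₂⟩ := abs_le.mp (h.trans_eq (abs_of_nonneg hc))
    rw [abs_of_nonneg (by linarith), abs_of_nonneg (by linarith), abs_of_nonneg hc]
    ring
  · obtain ⟨h₁, h₂⟩ := abs_le.mp (h.trans_eq (abs_of_nonpos hc))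
    rw [abs_of_nonpos (by linarith), abs_of_nonpos (by linarith), abs_of_nonpos hc]
    ring

lemma abs_le_mul_abs_of_forall_abs_mul_add_le {a b c m K : ℝ} (hac : |a| ≤ |c|)
    (h : ∀ t : ℝ, |t| ≤ 1 → |t * b + m| ≤ K * |t * a + c|) : |b| ≤ K * |c| := by
  have h₁ := h 1 (by norm_num)
  have h₂ := h (-1) (by norm_num)
  simp only [one_mul, neg_one_mul] at h₁ h₂
  have hb : 2 * |b| ≤ |b + m| + |-b + m| :=
    calc 2 * |b| = |(b + m) - (-b + m)| := by rw [← abs_two, ← abs_mul]; ring_nf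
      _ ≤ |b + m| + |-b + m| := abs_sub _ _
  have hc : K * |a + c| + K * |-a + c| = 2 * (K * |c|) := by
    rw [← mul_add, abs_add_add_abs_neg_add_of_abs_le hac]
    ring
  linarith

lemma abs_pi_single_le_one {n : ℕ} (j : Fin n) {t : ℝ} (ht : |t| ≤ 1) (k : Fin n) :
    |(Pi.single j t : Fin n → ℝ) k| ≤ 1 := by
  rcases eq_or_ne k j with rfl | hk
  · simpa using ht
  · simp [hk]

section

variable {n : ℕ} (A : Matrix (Fin (n + 1)) (Fin (n + 1)) ℝ)

lemma mulVec_snoc_zero_one_apply (i : Fin (n + 1)) :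
    (A *ᵥ Fin.snoc 0 1) i = A i (Fin.last n) := by
  simp [mulVec, dotProduct, Fin.sum_univ_castSucc]

lemma mulVec_snoc_single_one_apply (j : Fin n) (t : ℝ) (i : Fin (n + 1)) :
    (A *ᵥ Fin.snoc (Pi.single j t) 1) i = t * A i j.castSucc + A i (Fin.last n) := by
  simp [mulVec, dotProduct, Fin.sum_univ_castSucc, Pi.single_apply, mul_comm]

/-- `[A]` maps the box `[-1,1]^n`, seen in the affine chart `x ↦ [x : 1]`, into `[-K,K]^n`. -/
def MapsBoxInto (K : ℝ) : Prop :=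
  ∀ x : Fin n → ℝ, (∀ i, |x i| ≤ 1) →
    A.mulVec (Fin.snoc x 1) (Fin.last n) ≠ 0 ∧
    ∀ i : Fin n, |A.mulVec (Fin.snoc x 1) i.castSucc / A.mulVec (Fin.snoc x 1) (Fin.last n)| ≤ K

namespace MapsBoxInto

variable {A} {K : ℝ} (h : MapsBoxInto A K)
include h

lemma abs_mulVec_le (hK : 1 ≤ K) {x : Fin n → ℝ} (hx : ∀ i, |x i| ≤ 1) (i : Fin (n + 1)) :
    |(A *ᵥ Fin.snoc x 1) i| ≤ K * |(A *ᵥ Fin.snoc x 1) (Fin.last n)| := by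
  obtain ⟨hne, hle⟩ := h x hx
  induction i using Fin.lastCases with
  | last => exact le_mul_of_one_le_left (abs_nonneg _) hK
  | cast i =>
    have := hle i
    rw [abs_div, div_le_iff₀ (abs_pos.mpr hne)] at this
    linarith

lemma abs_last_row_le (j : Fin n) :
    |A (Fin.last n) j.castSucc| ≤ |A (Fin.last n) (Fin.last n)| :=
  abs_le_abs_of_forall_mul_add_ne_zero fun t ht => by
    simpa [mulVec_snoc_single_one_apply] using (h _ (abs_pi_single_le_one j ht)).1

lemma abs_apply_le (hK : 1 ≤ K) (i j : Fin (n + 1)) :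
    |A i j| ≤ K * |A (Fin.last n) (Fin.last n)| := by
  induction j using Fin.lastCases with
  | last => simpa [mulVec_snoc_zero_one_apply] using h.abs_mulVec_le hK (x := 0) (by simp) i
  | cast j =>
    refine abs_le_mul_abs_of_forall_abs_mul_add_le (m := A i (Fin.last n))
      (h.abs_last_row_le j) fun t ht => ?_
    simpa [mulVec_snoc_single_one_apply] using
      h.abs_mulVec_le hK (abs_pi_single_le_one j ht) i

end MapsBoxInto

end

theorem box_estimate_general (n : ℕ) (A : Matrix (Fin (n+1)) (Fin (n+1)) ℝ)
    (K : ℝ) (hK : 1 ≤ K)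
    (hbox : ∀ x : Fin n → ℝ, (∀ i, |x i| ≤ 1) →
      A.mulVec (Fin.snoc x 1) (Fin.last n) ≠ 0 ∧
      ∀ i : Fin n, |A.mulVec (Fin.snoc x 1) i.castSucc /
        A.mulVec (Fin.snoc x 1) (Fin.last n)| ≤ K) :
    ∀ i j : Fin (n+1), |A i j| ≤ 2 * K * |A (Fin.last n) (Fin.last n)| := by
  intro i j
  calc |A i j| ≤ K * |A (Fin.last n) (Fin.last n)| :=
        MapsBoxInto.abs_apply_le (A := A) hbox hK i j
    _ ≤ 2 * K * |A (Fin.last n) (Fin.last n)| := by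
        gcongr
        linarith

/-- **Box estimate.** If `A` is an invertible `(n+1)×(n+1)` real matrix, `K ≥ 1`, and the
projective transformation `[A]` maps the affine box `[-1,1]^n ⊂ RP^n` (affine chart
`x ↦ [x : 1]`) into `[-K,K]^n`, then every entry of `A` satisfies
`|A i j| ≤ 2K·|A (last) (last)|`. -/
theorem box_estimate (n : ℕ) (A : Matrix (Fin (n+1)) (Fin (n+1)) ℝ)
    (hA : IsUnit A.det) (K : ℝ) (hK : 1 ≤ K)
    (hbox : ∀ x : Fin n → ℝ, (∀ i, |x i| ≤ 1) →
      A.mulVec (Fin.snoc x 1) (Fin.last n) ≠ 0 ∧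
      ∀ i : Fin n, |A.mulVec (Fin.snoc x 1) i.castSucc /
        A.mulVec (Fin.snoc x 1) (Fin.last n)| ≤ K) :
    ∀ i j : Fin (n+1), |A i j| ≤ 2 * K * |A (Fin.last n) (Fin.last n)| :=
  box_estimate_general n A K hK hbox
end

section
/- Let C be a properly convex open cone in R^{n+1} and V(φ) = vol(C ∩ φ^{-1}((0,1])) for φ in the dual cone C*. Then V is a smooth, strictly convex function on C*. -/
open MeasureTheory Pointwise Set
open scoped RealInnerProductSpace ENNReal


/-- `t^m ≤ m! * exp t` for `t ≥ 0`. -/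
lemma pow_le_factorial_mul_exp {t : ℝ} (ht : 0 ≤ t) (m : ℕ) :
    t ^ m ≤ (m.factorial : ℝ) * Real.exp t := by
  have h1 : t ^ m / (m.factorial : ℝ) ≤ Real.exp t := by
    calc t ^ m / (m.factorial : ℝ)
        ≤ ∑ i ∈ Finset.range (m + 1), t ^ i / (i.factorial : ℝ) := by
          refine Finset.single_le_sum (f := fun i => t ^ i / (i.factorial : ℝ))
            (fun i _ => by positivity) (Finset.self_mem_range_succ m)
      _ ≤ Real.exp t := Real.sum_le_exp_of_nonneg ht _
  have hm : (0:ℝ) < (m.factorial : ℝ) := by exact_mod_cast m.factorial_pos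
  calc t ^ m = (t ^ m / (m.factorial : ℝ)) * (m.factorial : ℝ) := by field_simp
    _ ≤ Real.exp t * (m.factorial : ℝ) := mul_le_mul_of_nonneg_right h1 hm.le
    _ = (m.factorial : ℝ) * Real.exp t := by ring

lemma aux_poly_exp_bound (k d : ℕ) {c r : ℝ} (hc : 0 < c) (hr : 0 ≤ r) :
    r ^ k * Real.exp (-(c * r)) ≤
      (2 ^ (k + d + 1) * (1 + ((k + d + 1).factorial : ℝ) / c ^ (k + d + 1)))
        * (1 + r) ^ (-((d:ℝ) + 1)) := by
  have h1r : (0:ℝ) < 1 + r := by linarith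
  have hexp : (0:ℝ) < Real.exp (c * r) := Real.exp_pos _
  have hb : (0:ℝ) < (1 + r) ^ (d + 1) := by positivity
  have key : r ^ k * (1 + r) ^ (d + 1) ≤
      (2 ^ (k + d + 1) * (1 + ((k + d + 1).factorial : ℝ) / c ^ (k + d + 1)))
        * Real.exp (c * r) := by
    have h2 : r ^ k * (1 + r) ^ (d + 1) ≤ (1 + r) ^ (k + d + 1) := by
      have hkk : r ^ k ≤ (1 + r) ^ k := pow_le_pow_left₀ hr (by linarith) k
      calc r ^ k * (1 + r) ^ (d + 1) ≤ (1 + r) ^ k * (1 + r) ^ (d + 1) :=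
            mul_le_mul_of_nonneg_right hkk (by positivity)
        _ = (1 + r) ^ (k + d + 1) := by rw [← pow_add, Nat.add_assoc]
    have h3 : (1 + r) ^ (k + d + 1) ≤ 2 ^ (k + d + 1) * (1 + r ^ (k + d + 1)) := by
      rcases le_total r 1 with h | h
      · have : (1 + r) ^ (k + d + 1) ≤ 2 ^ (k + d + 1) :=
          pow_le_pow_left₀ (by linarith) (by linarith) _
        nlinarith [pow_nonneg hr (k + d + 1), pow_pos (show (0:ℝ) < 2 by norm_num) (k + d + 1)]
      · have h4 : (1 + r) ^ (k + d + 1) ≤ (2 * r) ^ (k + d + 1) :=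
          pow_le_pow_left₀ (by linarith) (by linarith) _
        rw [mul_pow] at h4
        nlinarith [pow_pos (show (0:ℝ) < 2 by norm_num) (k + d + 1)]
    have h5 : r ^ (k + d + 1) ≤ (((k + d + 1).factorial : ℝ) / c ^ (k + d + 1))
        * Real.exp (c * r) := by
      have h6 := pow_le_factorial_mul_exp (t := c * r) (by positivity) (k + d + 1)
      have hcm : (0:ℝ) < c ^ (k + d + 1) := pow_pos hc _
      rw [mul_pow] at h6
      rw [div_mul_eq_mul_div, le_div_iff₀ hcm]
      nlinarith
    have h7 : (1:ℝ) ≤ Real.exp (c * r) := Real.one_le_exp (by positivity)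
    have h8 : (0:ℝ) < 2 ^ (k + d + 1) := pow_pos (by norm_num) _
    nlinarith
  have hrw : (1 + r) ^ (-((d:ℝ) + 1)) = ((1 + r) ^ (d + 1))⁻¹ := by
    rw [← Real.rpow_natCast (1 + r) (d + 1), ← Real.rpow_neg h1r.le]
    norm_num
  have h6 : r ^ k * Real.exp (-(c * r)) = r ^ k / Real.exp (c * r) := by
    rw [Real.exp_neg]; ring
  rw [hrw, h6, ← div_eq_mul_inv, div_le_div_iff₀ hexp hb]
  nlinarith [key]

/-- Integrability of polynomial times exponential decay on Euclidean space. -/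
lemma integrable_pow_mul_exp_neg (n k : ℕ) {c : ℝ} (hc : 0 < c) :
    Integrable (fun x : EuclideanSpace ℝ (Fin (n+1)) =>
      ‖x‖ ^ k * Real.exp (-(c * ‖x‖))) := by
  have hdim : Module.finrank ℝ (EuclideanSpace ℝ (Fin (n+1))) = n + 1 :=
    finrank_euclideanSpace_fin
  set M : ℝ := 2 ^ (k + (n+1) + 1) * (1 + ((k + (n+1) + 1).factorial : ℝ) / c ^ (k + (n+1) + 1))
    with hMdef
  have hg : Integrable (fun x : EuclideanSpace ℝ (Fin (n+1)) =>
      M * (1 + ‖x‖) ^ (-(((n+1):ℝ) + 1))) := by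
    refine (integrable_one_add_norm ?_).const_mul M
    rw [hdim]; push_cast; linarith
  refine hg.mono' ?_ ?_
  · exact ((continuous_norm.pow k).mul
      (Real.continuous_exp.comp
        ((continuous_const.mul continuous_norm :
          Continuous fun x : EuclideanSpace ℝ (Fin (n+1)) => c * ‖x‖)).neg)).aestronglyMeasurable
  · refine Filter.Eventually.of_forall fun x => ?_
    rw [Real.norm_eq_abs, abs_of_nonneg (by positivity)]
    have := aux_poly_exp_bound k (n+1) hc (norm_nonneg x)
    rw [hMdef]
    convert this using 3
    push_cast
    ring


/-- A cone in `ℝ^{n+1}`: invariant under positive scaling. -/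
def IsCone {n : ℕ} (C : Set (EuclideanSpace ℝ (Fin (n+1)))) : Prop :=
  ∀ t : ℝ, 0 < t → t • C = C

/-- Sharpness: the closure of the cone contains no pair of antipodal nonzero vectors. -/
def IsSharp {n : ℕ} (C : Set (EuclideanSpace ℝ (Fin (n+1)))) : Prop :=
  ∀ v : EuclideanSpace ℝ (Fin (n+1)), v ≠ 0 → v ∈ closure C → -v ∉ closure C

/-- The open dual cone, identified with vectors via the inner product:
functionals strictly positive on `cl(C) \ {0}`. -/
def DualCone {n : ℕ} (C : Set (EuclideanSpace ℝ (Fin (n+1)))) :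
    Set (EuclideanSpace ℝ (Fin (n+1))) :=
  {v | ∀ x ∈ closure C, x ≠ 0 → 0 < ⟪x, v⟫}

/-- The volume function `V(φ) = vol(C ∩ φ⁻¹((0,1]))`. -/
noncomputable def coneVolume {n : ℕ} (C : Set (EuclideanSpace ℝ (Fin (n+1))))
    (v : EuclideanSpace ℝ (Fin (n+1))) : ℝ :=
  (volume (C ∩ {x | ⟪x, v⟫ ∈ Set.Ioc (0:ℝ) 1})).toReal

variable {n : ℕ} {C : Set (EuclideanSpace ℝ (Fin (n+1)))}

lemma IsCone.closure_smul (hCc : IsCone C) {t : ℝ} (ht : 0 < t) :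
    t • closure C = closure C := by
  rw [← closure_smul₀ t C, hCc t ht]

lemma IsCone.mem_closure_smul (hCc : IsCone C) {t : ℝ} (ht : 0 < t)
    {x : EuclideanSpace ℝ (Fin (n+1))} (hx : x ∈ closure C) : t • x ∈ closure C := by
  rw [← hCc.closure_smul ht]
  exact Set.smul_mem_smul_set hx

/-- Coercivity on the closed cone for a dual vector. -/
lemma DualCone.exists_coercive (hCc : IsCone C) {v : EuclideanSpace ℝ (Fin (n+1))}
    (hv : v ∈ DualCone C) :
    ∃ ε : ℝ, 0 < ε ∧ ∀ x ∈ closure C, ε * ‖x‖ ≤ ⟪x, v⟫ := by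
  classical
  set K := closure C ∩ Metric.sphere (0 : EuclideanSpace ℝ (Fin (n+1))) 1 with hK
  have hKc : IsCompact K := by
    exact (isCompact_sphere _ _).inter_left isClosed_closure
  rcases K.eq_empty_or_nonempty with hKe | hKne
  · refine ⟨1, one_pos, fun x hx => ?_⟩
    rcases eq_or_ne x 0 with rfl | hx0
    · simp
    · exfalso
      have hux : (‖x‖⁻¹ • x) ∈ K := by
        constructor
        · exact hCc.mem_closure_smul (inv_pos.2 (norm_pos_iff.2 hx0)) hx
        · simp [norm_smul, abs_of_nonneg, inv_mul_cancel₀ (norm_ne_zero_iff.2 hx0)]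
      rw [hKe] at hux
      exact hux
  · obtain ⟨y₀, hy₀K, hy₀min⟩ := hKc.exists_isMinOn hKne
      (((continuous_id.inner continuous_const) :
        Continuous fun y : EuclideanSpace ℝ (Fin (n+1)) => (⟪y, v⟫ : ℝ)).continuousOn)
    have hy₀ : (0:ℝ) < ⟪y₀, v⟫ := by
      refine hv y₀ hy₀K.1 ?_
      intro h
      have := hy₀K.2
      rw [h] at this
      simp at this
    refine ⟨⟪y₀, v⟫, hy₀, fun x hx => ?_⟩
    rcases eq_or_ne x 0 with rfl | hx0
    · simp
    · have hnx : (0:ℝ) < ‖x‖ := norm_pos_iff.2 hx0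
      have hux : (‖x‖⁻¹ • x) ∈ K := by
        constructor
        · exact hCc.mem_closure_smul (by positivity) hx
        · simp [norm_smul, abs_of_nonneg, inv_mul_cancel₀ hnx.ne']
      have := hy₀min hux
      simp only [Set.mem_setOf_eq] at this
      have h2 : ⟪y₀, v⟫ ≤ ⟪(‖x‖⁻¹ • x : EuclideanSpace ℝ (Fin (n+1))), v⟫ := this
      rw [real_inner_smul_left] at h2
      calc ⟪y₀, v⟫ * ‖x‖ ≤ (‖x‖⁻¹ * ⟪x, v⟫) * ‖x‖ := by nlinarith
        _ = ⟪x, v⟫ := by field_simp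
/-- The ball of radius ε around a dual vector is in the dual cone. -/
lemma DualCone.ball_subset {v : EuclideanSpace ℝ (Fin (n+1))} {ε : ℝ} (hε : 0 < ε)
    (hco : ∀ x ∈ closure C, ε * ‖x‖ ≤ ⟪x, v⟫) :
    Metric.ball v ε ⊆ DualCone C := by
  intro w hw x hx hx0
  have hnx : (0:ℝ) < ‖x‖ := norm_pos_iff.2 hx0
  have h1 : ⟪x, w⟫ = ⟪x, v⟫ + ⟪x, w - v⟫ := by
    rw [← inner_add_right]
    congr 1
    abel
  have h2 : |⟪x, w - v⟫| ≤ ‖x‖ * ‖w - v‖ := abs_real_inner_le_norm x (w - v)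
  have h3 : ‖w - v‖ < ε := by
    rw [← dist_eq_norm]
    exact Metric.mem_ball.1 hw
  have h4 := hco x hx
  show (0:ℝ) < ⟪x, w⟫
  rw [h1]
  have : ‖x‖ * ‖w - v‖ < ε * ‖x‖ := by nlinarith
  cases abs_le.1 h2 with
  | intro hl hr => nlinarith

lemma DualCone.isOpen (hCc : IsCone C) : IsOpen (DualCone C) := by
  rw [Metric.isOpen_iff]
  intro v hv
  obtain ⟨ε, hε, hco⟩ := DualCone.exists_coercive hCc hv
  exact ⟨ε, hε, DualCone.ball_subset hε hco⟩

lemma DualCone.convex : Convex ℝ (DualCone C) := by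
  intro v hv w hw a b ha hb hab
  intro x hx hx0
  have h1 := hv x hx hx0
  have h2 := hw x hx hx0
  rw [inner_add_right, real_inner_smul_right, real_inner_smul_right]
  rcases ha.eq_or_lt with rfl | ha'
  · simp only [zero_mul, zero_add]
    have hb1 : b = 1 := by linarith
    nlinarith
  · rcases hb.eq_or_lt with rfl | hb'
    · have ha1 : a = 1 := by linarith
      nlinarith
    · positivity

lemma zero_not_mem_of_sharp (hCo : IsOpen C) (hsharp : IsSharp C) :
    (0 : EuclideanSpace ℝ (Fin (n+1))) ∉ C := by
  intro h0
  obtain ⟨δ, hδ, hball⟩ := Metric.isOpen_iff.1 hCo 0 h0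
  set w : EuclideanSpace ℝ (Fin (n+1)) := EuclideanSpace.single 0 (δ/2) with hw
  have hwnorm : ‖w‖ = δ/2 := by
    rw [hw, EuclideanSpace.norm_single, Real.norm_eq_abs, abs_of_pos (by linarith)]
  have hwne : w ≠ 0 := by
    intro h
    rw [h, norm_zero] at hwnorm
    linarith
  have hwC : w ∈ C := hball (by simp [Metric.mem_ball, dist_zero_right, hwnorm]; linarith)
  have hwC' : -w ∈ C := by
    refine hball ?_
    simp only [Metric.mem_ball, dist_zero_right, norm_neg, hwnorm]
    linarith
  exact hsharp w hwne (subset_closure hwC) (subset_closure hwC')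

lemma inner_pos_of_mem_dual (hCo : IsOpen C) (hsharp : IsSharp C)
    {x v : EuclideanSpace ℝ (Fin (n+1))} (hx : x ∈ C) (hv : v ∈ DualCone C) :
    0 < ⟪x, v⟫ := by
  refine hv x (subset_closure hx) ?_
  intro h
  rw [h] at hx
  exact zero_not_mem_of_sharp hCo hsharp hx

lemma exists_inner_ne_zero (hCo : IsOpen C) (hne : C.Nonempty)
    {u : EuclideanSpace ℝ (Fin (n+1))} (hu : u ≠ 0) :
    ∃ x ∈ C, ⟪x, u⟫ ≠ 0 := by
  obtain ⟨x₀, hx₀⟩ := hne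
  rcases eq_or_ne (⟪x₀, u⟫) 0 with h0 | h0
  · obtain ⟨δ, hδ, hball⟩ := Metric.isOpen_iff.1 hCo x₀ hx₀
    have hnu : (0:ℝ) < ‖u‖ := norm_pos_iff.2 hu
    set c : ℝ := δ / (2 * ‖u‖) with hc
    have hcpos : 0 < c := by positivity
    refine ⟨x₀ + c • u, hball ?_, ?_⟩
    · rw [Metric.mem_ball, dist_eq_norm]
      have : x₀ + c • u - x₀ = c • u := by abel
      rw [this, norm_smul, Real.norm_eq_abs, abs_of_pos hcpos, hc]
      rw [div_mul_eq_mul_div]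
      rw [div_lt_iff₀ (by positivity)]
      nlinarith
    · rw [inner_add_left, h0, zero_add, real_inner_smul_left]
      have : (0:ℝ) < ⟪u, u⟫ := by
        rw [real_inner_self_eq_norm_mul_norm]
        positivity
      positivity
  · exact ⟨x₀, hx₀, h0⟩

section OneD

lemma lintegral_exp_neg_Ioi (a : ℝ) :
    ∫⁻ t in Set.Ioi a, ENNReal.ofReal (Real.exp (-t)) = ENNReal.ofReal (Real.exp (-a)) := by
  have hint : IntegrableOn (fun t : ℝ => Real.exp (-t)) (Set.Ioi a) := by
    simpa using exp_neg_integrableOn_Ioi a one_pos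
  rw [← MeasureTheory.ofReal_integral_eq_lintegral_ofReal hint
    (Filter.Eventually.of_forall fun t => (Real.exp_pos _).le), integral_exp_neg_Ioi]

lemma lintegral_gamma_aux (n : ℕ) :
    ∫⁻ t in Set.Ioi (0:ℝ), ENNReal.ofReal (Real.exp (-t) * t ^ (n+1)) =
      ENNReal.ofReal (((n+1).factorial : ℝ)) := by
  have hpos : (0:ℝ) < ((n+1 : ℕ) : ℝ) + 1 := by positivity
  have hint0 := Real.GammaIntegral_convergent hpos
  have hcongr : ∀ x ∈ Set.Ioi (0:ℝ),
      Real.exp (-x) * x ^ (((n+1 : ℕ) : ℝ) + 1 - 1) = Real.exp (-x) * x ^ (n+1) := by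
    intro x _
    congr 1
    rw [show ((n+1 : ℕ) : ℝ) + 1 - 1 = ((n+1 : ℕ) : ℝ) by ring, Real.rpow_natCast]
  have hint : IntegrableOn (fun t : ℝ => Real.exp (-t) * t ^ (n+1)) (Set.Ioi 0) :=
    hint0.congr_fun hcongr measurableSet_Ioi
  rw [← MeasureTheory.ofReal_integral_eq_lintegral_ofReal hint
    ((ae_restrict_iff' measurableSet_Ioi).2 (Filter.Eventually.of_forall fun x hx => by
      have : (0:ℝ) < x := hx
      positivity))]
  congr 1
  rw [← setIntegral_congr_fun measurableSet_Ioi hcongr, ← Real.Gamma_eq_integral hpos,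
    show ((n+1 : ℕ) : ℝ) + 1 = (((n+1) : ℕ) : ℝ) + 1 from rfl,
    Real.Gamma_nat_eq_factorial (n+1)]

end OneD

section Hyper

variable {n : ℕ}

lemma volume_hyperplane {v : EuclideanSpace ℝ (Fin (n+1))} (hv : v ≠ 0) (t : ℝ) :
    volume {x : EuclideanSpace ℝ (Fin (n+1)) | ⟪x, v⟫ = t} = 0 := by
  classical
  set W : Submodule ℝ (EuclideanSpace ℝ (Fin (n+1))) := LinearMap.ker (innerSL ℝ v : EuclideanSpace ℝ (Fin (n+1)) →ₗ[ℝ] ℝ) with hW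
  have hWne : W ≠ ⊤ := by
    intro h
    have hvW : v ∈ W := h ▸ Submodule.mem_top
    have : ⟪v, v⟫ = 0 := hvW
    exact hv (inner_self_eq_zero.1 this)
  have hvv : ⟪v, v⟫ ≠ 0 := inner_self_ne_zero.2 hv
  set x₀ : EuclideanSpace ℝ (Fin (n+1)) := (t / ⟪v, v⟫) • v with hx₀
  have hset : {x : EuclideanSpace ℝ (Fin (n+1)) | ⟪x, v⟫ = t} = x₀ +ᵥ (W : Set _) := by
    ext x
    rw [Set.mem_vadd_set_iff_neg_vadd_mem]
    simp only [Set.mem_setOf_eq, SetLike.mem_coe, vadd_eq_add]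
    have : ((-x₀ + x) ∈ W) ↔ ⟪v, -x₀ + x⟫ = 0 := by
      rw [hW, LinearMap.mem_ker]
      exact Iff.rfl
    rw [this, inner_add_right, inner_neg_right, hx₀, real_inner_smul_right]
    rw [div_mul_cancel₀ _ hvv]
    rw [real_inner_comm]
    constructor <;> intro h <;> linarith
  rw [hset, measure_vadd]
  exact MeasureTheory.Measure.addHaar_submodule volume W hWne

end Hyper

section Scaling

variable {n : ℕ} {C : Set (EuclideanSpace ℝ (Fin (n+1)))}

lemma volume_slab_smul (hCc : IsCone C) (v : EuclideanSpace ℝ (Fin (n+1))) {t : ℝ} (ht : 0 < t) :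
    volume (C ∩ {x | ⟪x, v⟫ ∈ Set.Ioc (0:ℝ) t}) =
      ENNReal.ofReal (t ^ (n+1)) * volume (C ∩ {x | ⟪x, v⟫ ∈ Set.Ioc (0:ℝ) 1}) := by
  have hset : C ∩ {x | ⟪x, v⟫ ∈ Set.Ioc (0:ℝ) t} =
      t • (C ∩ {x | ⟪x, v⟫ ∈ Set.Ioc (0:ℝ) 1}) := by
    ext x
    rw [Set.mem_smul_set_iff_inv_smul_mem₀ ht.ne']
    simp only [Set.mem_inter_iff, Set.mem_setOf_eq, Set.mem_Ioc]
    have hC : t⁻¹ • x ∈ C ↔ x ∈ C := by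
      constructor
      · intro h
        have : t • t⁻¹ • x ∈ t • C := Set.smul_mem_smul_set h
        rwa [smul_smul, mul_inv_cancel₀ ht.ne', one_smul, hCc t ht] at this
      · intro h
        rw [← hCc t ht] at h
        rwa [Set.mem_smul_set_iff_inv_smul_mem₀ ht.ne'] at h
    have hinner : ⟪t⁻¹ • x, v⟫ = t⁻¹ * ⟪x, v⟫ := real_inner_smul_left x v t⁻¹
    rw [hC, hinner]
    have hti : (0:ℝ) < t⁻¹ := inv_pos.2 ht
    constructor
    · rintro ⟨h1, h2, h3⟩
      refine ⟨h1, by positivity, ?_⟩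
      rw [inv_mul_le_iff₀ ht, mul_one]
      exact h3
    · rintro ⟨h1, h2, h3⟩
      refine ⟨h1, by nlinarith, ?_⟩
      rw [inv_mul_le_iff₀ ht, mul_one] at h3
      exact h3
  rw [hset, MeasureTheory.Measure.addHaar_smul_of_nonneg volume ht.le, finrank_euclideanSpace_fin]

end Scaling

section Rep

variable {n : ℕ} {C : Set (EuclideanSpace ℝ (Fin (n+1)))}

lemma rep_lemma (hCo : IsOpen C) (hCc : IsCone C) (hsharp : IsSharp C) (hne : C.Nonempty)
    {v : EuclideanSpace ℝ (Fin (n+1))} (hv : v ∈ DualCone C) :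
    ∫ x in C, Real.exp (-⟪x, v⟫) = (((n+1).factorial : ℝ)) * coneVolume C v := by
  obtain ⟨ε, hε, hco⟩ := DualCone.exists_coercive hCc hv
  have hgC : ∀ x ∈ C, (0:ℝ) < ⟪x, v⟫ := fun x hx => inner_pos_of_mem_dual hCo hsharp hx hv
  have hv0 : v ≠ 0 := by
    obtain ⟨x₀, hx₀⟩ := hne
    intro h
    have := hgC x₀ hx₀
    rw [h, inner_zero_right] at this
    exact lt_irrefl _ this
  have hg : Continuous fun x : EuclideanSpace ℝ (Fin (n+1)) => (⟪x, v⟫ : ℝ) :=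
    continuous_id.inner continuous_const
  set K : ℝ≥0∞ := volume (C ∩ {x | ⟪x, v⟫ ∈ Set.Ioc (0:ℝ) 1}) with hK
  -- K is finite
  have hKfin : K ≠ ⊤ := by
    have hsub : C ∩ {x | ⟪x, v⟫ ∈ Set.Ioc (0:ℝ) 1} ⊆
        Metric.closedBall (0 : EuclideanSpace ℝ (Fin (n+1))) ε⁻¹ := by
      rintro x ⟨hxC, hx1, hx2⟩
      rw [Metric.mem_closedBall, dist_zero_right]
      have h1 := hco x (subset_closure hxC)
      calc ‖x‖ = ε⁻¹ * (ε * ‖x‖) := by field_simp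
        _ ≤ ε⁻¹ * 1 := by
            refine mul_le_mul_of_nonneg_left ?_ (by positivity)
            linarith
        _ = ε⁻¹ := mul_one _
    exact ((measure_mono hsub).trans_lt measure_closedBall_lt_top).ne
  -- the indicator function
  set F : EuclideanSpace ℝ (Fin (n+1)) → ℝ → ℝ≥0∞ := fun x t =>
    (Set.Ioi (⟪x, v⟫ : ℝ)).indicator (fun s => ENNReal.ofReal (Real.exp (-s))) t with hF
  -- step 1
  have step1 : ∫⁻ x in C, ENNReal.ofReal (Real.exp (-⟪x, v⟫)) =
      ∫⁻ x in C, ∫⁻ t in Set.Ioi (0:ℝ), F x t := by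
    refine setLIntegral_congr_fun hCo.measurableSet
      (fun x hx => ?_)
    have hgx : (0:ℝ) < ⟪x, v⟫ := hgC x hx
    rw [hF]
    rw [lintegral_indicator measurableSet_Ioi, Measure.restrict_restrict measurableSet_Ioi,
      Set.inter_eq_left.2 (Set.Ioi_subset_Ioi hgx.le), lintegral_exp_neg_Ioi]
  -- step 2: swap
  have step2 : ∫⁻ x in C, ∫⁻ t in Set.Ioi (0:ℝ), F x t =
      ∫⁻ t in Set.Ioi (0:ℝ), ∫⁻ x in C, F x t := by
    refine lintegral_lintegral_swap ?_
    have : Function.uncurry F = Set.indicator {p : EuclideanSpace ℝ (Fin (n+1)) × ℝ |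
        ⟪p.1, v⟫ < p.2} (fun p => ENNReal.ofReal (Real.exp (-p.2))) := by
      funext p
      simp only [Function.uncurry, hF, Set.indicator_apply, Set.mem_Ioi, Set.mem_setOf_eq]
    rw [this]
    refine (Measurable.indicator ?_ ?_).aemeasurable
    · exact (ENNReal.measurable_ofReal.comp
        ((Real.continuous_exp.comp continuous_neg).comp continuous_snd).measurable)
    · exact (isOpen_lt (hg.comp continuous_fst) continuous_snd).measurableSet
  -- step 3: inner evaluation
  have step3 : ∫⁻ t in Set.Ioi (0:ℝ), ∫⁻ x in C, F x t =
      ∫⁻ t in Set.Ioi (0:ℝ), ENNReal.ofReal (Real.exp (-t) * t ^ (n+1)) * K := by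
    refine setLIntegral_congr_fun measurableSet_Ioi
      (fun t ht => ?_)
    have ht0 : (0:ℝ) < t := ht
    have hSm : MeasurableSet {x : EuclideanSpace ℝ (Fin (n+1)) | ⟪x, v⟫ < t} :=
      (isOpen_lt hg continuous_const).measurableSet
    have hFx : ∀ x, F x t = Set.indicator {x : EuclideanSpace ℝ (Fin (n+1)) | ⟪x, v⟫ < t}
        (fun _ => ENNReal.ofReal (Real.exp (-t))) x := by
      intro x
      simp only [hF, Set.indicator_apply, Set.mem_Ioi, Set.mem_setOf_eq]
    have h1 : ∫⁻ x in C, F x t =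
        ENNReal.ofReal (Real.exp (-t)) * volume ({x : EuclideanSpace ℝ (Fin (n+1)) |
          ⟪x, v⟫ < t} ∩ C) := by
      simp only [hFx]
      rw [lintegral_indicator hSm, Measure.restrict_restrict hSm, lintegral_const,
        Measure.restrict_apply_univ]
    -- volume of {g < t} ∩ C equals volume of Ioc slab
    have h2 : volume ({x : EuclideanSpace ℝ (Fin (n+1)) | ⟪x, v⟫ < t} ∩ C) =
        volume (C ∩ {x | ⟪x, v⟫ ∈ Set.Ioc (0:ℝ) t}) := by
      have hIoo : {x : EuclideanSpace ℝ (Fin (n+1)) | ⟪x, v⟫ < t} ∩ C =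
          C ∩ {x | ⟪x, v⟫ ∈ Set.Ioo (0:ℝ) t} := by
        ext x
        simp only [Set.mem_inter_iff, Set.mem_setOf_eq, Set.mem_Ioo]
        constructor
        · rintro ⟨h1', h2'⟩
          exact ⟨h2', hgC x h2', h1'⟩
        · rintro ⟨h1', h2', h3'⟩
          exact ⟨h3', h1'⟩
      rw [hIoo]
      refine le_antisymm (measure_mono fun x hx => ⟨hx.1, hx.2.1, hx.2.2.le⟩) ?_
      have hsplit : C ∩ {x | ⟪x, v⟫ ∈ Set.Ioc (0:ℝ) t} ⊆
          (C ∩ {x | ⟪x, v⟫ ∈ Set.Ioo (0:ℝ) t}) ∪ {x | ⟪x, v⟫ = t} := by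
        rintro x ⟨hxC, hx1, hx2⟩
        rcases lt_or_eq_of_le hx2 with h | h
        · exact Or.inl ⟨hxC, hx1, h⟩
        · exact Or.inr h
      calc volume (C ∩ {x | ⟪x, v⟫ ∈ Set.Ioc (0:ℝ) t})
          ≤ volume ((C ∩ {x | ⟪x, v⟫ ∈ Set.Ioo (0:ℝ) t}) ∪ {x | ⟪x, v⟫ = t}) :=
            measure_mono hsplit
        _ ≤ volume (C ∩ {x | ⟪x, v⟫ ∈ Set.Ioo (0:ℝ) t}) + volume {x | ⟪x, v⟫ = t} :=
            measure_union_le _ _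
        _ = volume (C ∩ {x | ⟪x, v⟫ ∈ Set.Ioo (0:ℝ) t}) := by
            rw [volume_hyperplane hv0 t, add_zero]
    rw [h1, h2, volume_slab_smul hCc v ht0, ← hK]
    rw [ENNReal.ofReal_mul (Real.exp_pos _).le]
    ring
  -- step 4: pull out K
  have step4 : ∫⁻ t in Set.Ioi (0:ℝ), ENNReal.ofReal (Real.exp (-t) * t ^ (n+1)) * K =
      ENNReal.ofReal (((n+1).factorial : ℝ)) * K := by
    rw [lintegral_mul_const K, lintegral_gamma_aux n]
    exact (ENNReal.measurable_ofReal.comp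
      (((Real.continuous_exp.comp continuous_neg).mul (continuous_pow (n+1))).measurable))
  -- combine
  have hL : ∫⁻ x in C, ENNReal.ofReal (Real.exp (-⟪x, v⟫)) =
      ENNReal.ofReal (((n+1).factorial : ℝ)) * K := by
    rw [step1, step2, step3, step4]
  rw [MeasureTheory.integral_eq_lintegral_of_nonneg_ae
    (f := fun x : EuclideanSpace ℝ (Fin (n+1)) => Real.exp (-⟪x, v⟫))
    (Filter.Eventually.of_forall fun x => (Real.exp_pos _).le)
    ((Real.continuous_exp.comp hg.neg).aestronglyMeasurable.restrict)]
  rw [hL, ENNReal.toReal_mul, ENNReal.toReal_ofReal (by positivity)]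
  rfl

end Rep

section Analytic

variable {n : ℕ} {C : Set (EuclideanSpace ℝ (Fin (n+1)))}

set_option synthInstance.maxHeartbeats 1000000 in
set_option maxHeartbeats 2000000 in
lemma analyticOnNhd_laplace (hCo : IsOpen C) (hCc : IsCone C) :
    AnalyticOnNhd ℝ (fun v => ∫ x in C, Real.exp (-⟪x, v⟫)) (DualCone C) := by
  classical
  intro v₀ hv₀
  obtain ⟨ε, hε, hco⟩ := DualCone.exists_coercive hCc hv₀
  -- the multilinear integrands
  set Φ : (m : ℕ) → EuclideanSpace ℝ (Fin (n+1)) →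
      ContinuousMultilinearMap ℝ (fun _ : Fin m => EuclideanSpace ℝ (Fin (n+1))) ℝ :=
    fun m x => (ContinuousMultilinearMap.mkPiAlgebra ℝ (Fin m) ℝ).compContinuousLinearMap
      (fun _ => innerSL ℝ x) with hΦ
  set g : (m : ℕ) → EuclideanSpace ℝ (Fin (n+1)) →
      ContinuousMultilinearMap ℝ (fun _ : Fin m => EuclideanSpace ℝ (Fin (n+1))) ℝ :=
    fun m x => Real.exp (-⟪x, v₀⟫) • Φ m x with hg
  -- continuity of Φ m
  have hΦc : ∀ m : ℕ, Continuous (Φ m) := by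
    intro m
    have h1 : Continuous fun x : EuclideanSpace ℝ (Fin (n+1)) =>
        (fun _ : Fin m => innerSL ℝ x) := continuous_pi fun _ => (innerSL ℝ).continuous
    have h2 : Continuous fun x : EuclideanSpace ℝ (Fin (n+1)) =>
        (ContinuousMultilinearMap.compContinuousLinearMapContinuousMultilinear ℝ
          (fun _ : Fin m => EuclideanSpace ℝ (Fin (n+1))) (fun _ : Fin m => ℝ) ℝ)
          (fun _ => innerSL ℝ x) :=
      (ContinuousMultilinearMap.compContinuousLinearMapContinuousMultilinear ℝ
          (fun _ : Fin m => EuclideanSpace ℝ (Fin (n+1))) (fun _ : Fin m => ℝ) ℝ).cont.comp h1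
    have h3 := (ContinuousLinearMap.apply ℝ
      (ContinuousMultilinearMap ℝ (fun _ : Fin m => EuclideanSpace ℝ (Fin (n+1))) ℝ)
      (ContinuousMultilinearMap.mkPiAlgebra ℝ (Fin m) ℝ)).continuous.comp h2
    exact h3
  -- norm bound for Φ m
  have hΦn : ∀ (m : ℕ) (x : EuclideanSpace ℝ (Fin (n+1))), ‖Φ m x‖ ≤ ‖x‖ ^ m := by
    intro m x
    calc ‖Φ m x‖ ≤ ‖ContinuousMultilinearMap.mkPiAlgebra ℝ (Fin m) ℝ‖ *
          ∏ _i : Fin m, ‖innerSL ℝ x‖ :=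
        ContinuousMultilinearMap.norm_compContinuousLinearMap_le _ _
      _ ≤ 1 * ∏ _i : Fin m, ‖x‖ := by
          rw [ContinuousMultilinearMap.norm_mkPiAlgebra]
          refine mul_le_mul_of_nonneg_left ?_ zero_le_one
          refine Finset.prod_le_prod (fun _ _ => norm_nonneg _) fun _ _ => ?_
          rw [innerSL_apply_norm]
      _ = ‖x‖ ^ m := by rw [one_mul, Finset.prod_const, Finset.card_fin]
  -- continuity of g m
  have hgc : ∀ m : ℕ, Continuous (g m) := fun m =>
    ((Real.continuous_exp.comp (continuous_id.inner continuous_const).neg)).smul (hΦc m)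
  -- pointwise norm bound for g m on C
  have hgn : ∀ (m : ℕ) (x : EuclideanSpace ℝ (Fin (n+1))), x ∈ C →
      ‖g m x‖ ≤ ‖x‖ ^ m * Real.exp (-(ε * ‖x‖)) := by
    intro m x hx
    rw [show g m x = Real.exp (-⟪x, v₀⟫) • Φ m x from rfl,
      norm_smul (Real.exp (-⟪x, v₀⟫)) (Φ m x), Real.norm_eq_abs, abs_of_pos (Real.exp_pos _)]
    have h1 : Real.exp (-⟪x, v₀⟫) ≤ Real.exp (-(ε * ‖x‖)) :=
      Real.exp_le_exp.2 (by have := hco x (subset_closure hx); linarith)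
    have h2 := hΦn m x
    have h3 : (0:ℝ) ≤ ‖x‖ ^ m := by positivity
    nlinarith [norm_nonneg (Φ m x), Real.exp_pos (-⟪x, v₀⟫), Real.exp_pos (-(ε * ‖x‖))]
  -- integrability of g m on C
  have hg_int : ∀ m : ℕ, IntegrableOn (g m) C volume := by
    intro m
    refine Integrable.mono' ((integrable_pow_mul_exp_neg n m hε).integrableOn) 
      ((hgc m).aestronglyMeasurable.restrict) ?_
    refine (ae_restrict_iff' hCo.measurableSet).2 (Filter.Eventually.of_forall fun x hx => ?_)
    exact hgn m x hx
  -- the formal power series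
  set p : FormalMultilinearSeries ℝ (EuclideanSpace ℝ (Fin (n+1))) ℝ :=
    fun m => ((-1:ℝ)^m * ((m.factorial : ℝ))⁻¹) • (∫ x in C, g m x) with hp
  -- global integral of the decay majorant
  set A : ℝ := ∫ x : EuclideanSpace ℝ (Fin (n+1)), Real.exp (-(ε/2 * ‖x‖)) with hA
  have hA_int : Integrable (fun x : EuclideanSpace ℝ (Fin (n+1)) =>
      Real.exp (-(ε/2 * ‖x‖))) := by
    have := integrable_pow_mul_exp_neg n 0 (show (0:ℝ) < ε/2 by linarith)
    simpa using this
  have hA_nonneg : 0 ≤ A := integral_nonneg fun x => (Real.exp_pos _).le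
  -- pointwise bound used twice: ‖x‖^m * exp(-ε‖x‖) ≤ (2/ε)^m * m! * exp(-(ε/2)‖x‖)
  have hkey : ∀ (m : ℕ) (x : EuclideanSpace ℝ (Fin (n+1))),
      ‖x‖ ^ m * Real.exp (-(ε * ‖x‖)) ≤
        (2/ε) ^ m * (m.factorial : ℝ) * Real.exp (-(ε/2 * ‖x‖)) := by
    intro m x
    have h1 := pow_le_factorial_mul_exp (t := ε/2 * ‖x‖) (by positivity) m
    have h2 : ‖x‖ ^ m ≤ (2/ε) ^ m * (m.factorial : ℝ) * Real.exp (ε/2 * ‖x‖) := by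
      have h6 : ((2:ℝ)/ε) ^ m * ((ε/2 * ‖x‖) ^ m) = ‖x‖ ^ m := by
        rw [← mul_pow, show (2:ℝ)/ε * (ε/2 * ‖x‖) = ‖x‖ by field_simp]
      calc ‖x‖ ^ m = (2/ε) ^ m * ((ε/2 * ‖x‖) ^ m) := h6.symm
        _ ≤ (2/ε) ^ m * ((m.factorial : ℝ) * Real.exp (ε/2 * ‖x‖)) :=
            mul_le_mul_of_nonneg_left h1 (by positivity)
        _ = (2/ε) ^ m * (m.factorial : ℝ) * Real.exp (ε/2 * ‖x‖) := by ring
    have h5 : Real.exp (ε/2 * ‖x‖) * Real.exp (-(ε * ‖x‖)) = Real.exp (-(ε/2 * ‖x‖)) := by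
      rw [← Real.exp_add]
      congr 1
      ring
    calc ‖x‖ ^ m * Real.exp (-(ε * ‖x‖))
        ≤ ((2/ε) ^ m * (m.factorial : ℝ) * Real.exp (ε/2 * ‖x‖)) * Real.exp (-(ε * ‖x‖)) :=
          mul_le_mul_of_nonneg_right h2 (Real.exp_pos _).le
      _ = (2/ε) ^ m * (m.factorial : ℝ) * Real.exp (-(ε/2 * ‖x‖)) := by
          rw [mul_assoc ((2/ε : ℝ)^m * (m.factorial:ℝ)), h5]
  -- bound for the integral of the majorant over C
  have hmaj : ∀ m : ℕ, ∫ x in C, ‖x‖ ^ m * Real.exp (-(ε * ‖x‖)) ≤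
      (2/ε) ^ m * (m.factorial : ℝ) * A := by
    intro m
    have hi1 : IntegrableOn (fun x : EuclideanSpace ℝ (Fin (n+1)) =>
        ‖x‖ ^ m * Real.exp (-(ε * ‖x‖))) C := (integrable_pow_mul_exp_neg n m hε).integrableOn
    have hi2 : IntegrableOn (fun x : EuclideanSpace ℝ (Fin (n+1)) =>
        (2/ε) ^ m * (m.factorial : ℝ) * Real.exp (-(ε/2 * ‖x‖))) C :=
      ((hA_int.const_mul _)).integrableOn
    calc ∫ x in C, ‖x‖ ^ m * Real.exp (-(ε * ‖x‖))
        ≤ ∫ x in C, (2/ε) ^ m * (m.factorial : ℝ) * Real.exp (-(ε/2 * ‖x‖)) :=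
          integral_mono_ae hi1 hi2 (Filter.Eventually.of_forall fun x => hkey m x)
      _ = (2/ε) ^ m * (m.factorial : ℝ) * ∫ x in C, Real.exp (-(ε/2 * ‖x‖)) := by
          have heq : ∫ x in C, (2/ε) ^ m * (m.factorial : ℝ) * Real.exp (-(ε/2 * ‖x‖)) =
              ((2/ε) ^ m * (m.factorial : ℝ)) • ∫ x in C, Real.exp (-(ε/2 * ‖x‖)) := by
            rw [← integral_smul]
            exact integral_congr_ae (Filter.Eventually.of_forall fun x => rfl)
          rw [heq]
          rfl
      _ ≤ (2/ε) ^ m * (m.factorial : ℝ) * A := by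
          refine mul_le_mul_of_nonneg_left ?_ (by positivity)
          exact setIntegral_le_integral hA_int
            (Filter.Eventually.of_forall fun x => (Real.exp_pos _).le)
  -- norm bound on p m
  have hpn : ∀ m : ℕ, ‖p m‖ ≤ (2/ε) ^ m * A := by
    intro m
    rw [show p m = ((-1:ℝ)^m * ((m.factorial : ℝ))⁻¹) • (∫ x in C, g m x) from rfl]
    have h0 : (0:ℝ) < (m.factorial : ℝ) := by exact_mod_cast m.factorial_pos
    have h1 : ‖((-1:ℝ)^m * ((m.factorial : ℝ))⁻¹)‖ = ((m.factorial : ℝ))⁻¹ := by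
      rw [norm_mul, norm_pow, norm_neg, norm_one, one_pow, one_mul, Real.norm_eq_abs,
        abs_of_pos (by positivity)]
    rw [norm_smul ((-1:ℝ)^m * ((m.factorial : ℝ))⁻¹) (∫ x in C, g m x), h1]
    have h2 : ‖∫ x in C, g m x‖ ≤ ∫ x in C, ‖x‖ ^ m * Real.exp (-(ε * ‖x‖)) := by
      refine norm_integral_le_of_norm_le ((integrable_pow_mul_exp_neg n m hε).integrableOn) ?_
      exact (ae_restrict_iff' hCo.measurableSet).2
        (Filter.Eventually.of_forall fun x hx => hgn m x hx)
    calc ((m.factorial : ℝ))⁻¹ * ‖∫ x in C, g m x‖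
        ≤ ((m.factorial : ℝ))⁻¹ * ((2/ε) ^ m * (m.factorial : ℝ) * A) := by
          refine mul_le_mul_of_nonneg_left (h2.trans (hmaj m)) (by positivity)
      _ = (2/ε) ^ m * A := by field_simp
  -- radius bound
  have hr_le : ENNReal.ofReal (ε/4) ≤ p.radius := by
    have h1 : ∀ m : ℕ, ‖p m‖ * ((ε/4).toNNReal : ℝ) ^ m ≤ A := by
      intro m
      have h2 : ((ε/4).toNNReal : ℝ) = ε/4 := Real.coe_toNNReal _ (by linarith)
      rw [h2]
      have h3 : (0:ℝ) ≤ (ε/4)^m := by positivity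
      calc ‖p m‖ * (ε/4)^m ≤ ((2/ε) ^ m * A) * (ε/4)^m :=
            mul_le_mul_of_nonneg_right (hpn m) h3
        _ = A * ((2/ε) * (ε/4))^m := by rw [mul_pow]; ring
        _ = A * (1/2)^m := by
            congr 2
            field_simp
            ring
        _ ≤ A * 1 := by
            refine mul_le_mul_of_nonneg_left ?_ hA_nonneg
            refine pow_le_one₀ (by norm_num) (by norm_num)
        _ = A := mul_one A
    have := FormalMultilinearSeries.le_radius_of_bound p A h1
    rwa [ENNReal.ofReal] 
  -- the power series ball
  have hball : HasFPowerSeriesOnBall (fun v => ∫ x in C, Real.exp (-⟪x, v⟫)) p v₀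
      (ENNReal.ofReal (ε/4)) := by
    refine ⟨hr_le, by simp; linarith, ?_⟩
    intro y hy
    have hynorm : ‖y‖ < ε/4 := by
      have h1 := mem_emetric_ball_zero_iff.1 hy
      rw [← ofReal_norm] at h1
      exact (ENNReal.ofReal_lt_ofReal_iff (by linarith)).1 h1
    have hy_nonneg : (0:ℝ) ≤ ‖y‖ := norm_nonneg y
    -- the summands
    set Fy : ℕ → EuclideanSpace ℝ (Fin (n+1)) → ℝ := fun m x =>
      Real.exp (-⟪x, v₀⟫) * ((-⟪x, y⟫) ^ m / (m.factorial : ℝ)) with hFy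
    -- p m applied to y
    have happ : ∀ m : ℕ, (p m) (fun _ => y) = ∫ x in C, Fy m x := by
      intro m
      rw [show p m = ((-1:ℝ)^m * ((m.factorial : ℝ))⁻¹) • (∫ x in C, g m x) from rfl]
      rw [ContinuousMultilinearMap.smul_apply]
      rw [ContinuousMultilinearMap.integral_apply (hg_int m)]
      have hgy : ∀ x, (g m x) (fun _ => y) = Real.exp (-⟪x, v₀⟫) * (⟪x, y⟫) ^ m := by
        intro x
        rw [show g m x = Real.exp (-⟪x, v₀⟫) • Φ m x from rfl]
        simp only [ContinuousMultilinearMap.smul_apply, smul_eq_mul]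
        congr 1
        rw [show Φ m x = (ContinuousMultilinearMap.mkPiAlgebra ℝ (Fin m) ℝ).compContinuousLinearMap
          (fun _ => innerSL ℝ x) from rfl]
        rw [ContinuousMultilinearMap.compContinuousLinearMap_apply,
          ContinuousMultilinearMap.mkPiAlgebra_apply]
        simp only [innerSL_apply_apply]
        rw [Finset.prod_const, Finset.card_fin]
      simp only [hgy]
      rw [← integral_smul]
      refine integral_congr_ae (Filter.Eventually.of_forall fun x => ?_)
      show ((-1:ℝ)^m * ((m.factorial : ℝ))⁻¹) * (Real.exp (-⟪x, v₀⟫) * (⟪x, y⟫) ^ m) =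
        Real.exp (-⟪x, v₀⟫) * ((-⟪x, y⟫) ^ m / (m.factorial : ℝ))
      rw [neg_pow]
      field_simp
      ring
    -- pointwise norm bound for Fy m on C
    have hFyb : ∀ (m : ℕ), ∀ x ∈ C, ‖Fy m x‖ ≤
        ‖y‖ ^ m * ((m.factorial : ℝ))⁻¹ * (‖x‖ ^ m * Real.exp (-(ε * ‖x‖))) := by
      intro m x hx
      have h0 : (0:ℝ) < (m.factorial : ℝ) := by exact_mod_cast m.factorial_pos
      rw [hFy]
      have h1 : |(-⟪x, y⟫) ^ m| ≤ (‖x‖ * ‖y‖) ^ m := by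
        rw [abs_pow, abs_neg]
        exact pow_le_pow_left₀ (abs_nonneg _) (abs_real_inner_le_norm x y) m
      have h2 : Real.exp (-⟪x, v₀⟫) ≤ Real.exp (-(ε * ‖x‖)) :=
        Real.exp_le_exp.2 (by have := hco x (subset_closure hx); linarith)
      rw [Real.norm_eq_abs, abs_mul, abs_div, abs_of_pos (Real.exp_pos _),
        abs_of_pos h0]
      rw [mul_pow] at h1
      have hb1 : (0:ℝ) ≤ Real.exp (-(ε * ‖x‖)) := (Real.exp_pos _).le
      calc Real.exp (-⟪x, v₀⟫) * (|(-⟪x, y⟫) ^ m| / (m.factorial : ℝ))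
          ≤ Real.exp (-(ε * ‖x‖)) * ((‖x‖^m * ‖y‖^m) / (m.factorial : ℝ)) :=
            mul_le_mul h2 (by gcongr) (by positivity) hb1
        _ = ‖y‖ ^ m * ((m.factorial : ℝ))⁻¹ * (‖x‖ ^ m * Real.exp (-(ε * ‖x‖))) := by
            field_simp
    -- integrability of Fy m
    have hFy_int : ∀ m : ℕ, IntegrableOn (Fy m) C volume := by
      intro m
      refine Integrable.mono'
        (((integrable_pow_mul_exp_neg n m hε).const_mul (‖y‖ ^ m * ((m.factorial : ℝ))⁻¹)).integrableOn)
        ?_ ?_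
      · refine Continuous.aestronglyMeasurable ?_ |>.restrict
        refine ((Real.continuous_exp.comp (continuous_id.inner continuous_const).neg).mul ?_)
        exact ((continuous_id.inner continuous_const).neg.pow m).div_const _
      · exact (ae_restrict_iff' hCo.measurableSet).2
          (Filter.Eventually.of_forall fun x hx => hFyb m x hx)
    -- geometric bound for the integrals of norms
    have hq0 : (0:ℝ) ≤ 2 * ‖y‖ / ε := by positivity
    have hq1 : 2 * ‖y‖ / ε < 1 := by
      rw [div_lt_one hε]
      linarith
    have hbound : ∀ m : ℕ, ∫ x in C, ‖Fy m x‖ ≤ (2 * ‖y‖ / ε) ^ m * A := by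
      intro m
      have h0 : (0:ℝ) < (m.factorial : ℝ) := by exact_mod_cast m.factorial_pos
      have hi1 : IntegrableOn (fun x => ‖Fy m x‖) C volume := (hFy_int m).norm
      have hi2 : IntegrableOn (fun x : EuclideanSpace ℝ (Fin (n+1)) =>
          ‖y‖ ^ m * ((m.factorial : ℝ))⁻¹ * (‖x‖ ^ m * Real.exp (-(ε * ‖x‖)))) C :=
        ((integrable_pow_mul_exp_neg n m hε).const_mul _).integrableOn
      calc ∫ x in C, ‖Fy m x‖
          ≤ ∫ x in C, ‖y‖ ^ m * ((m.factorial : ℝ))⁻¹ * (‖x‖ ^ m * Real.exp (-(ε * ‖x‖))) :=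
            integral_mono_ae hi1 hi2 ((ae_restrict_iff' hCo.measurableSet).2
              (Filter.Eventually.of_forall fun x hx => hFyb m x hx))
        _ = ‖y‖ ^ m * ((m.factorial : ℝ))⁻¹ * ∫ x in C, ‖x‖ ^ m * Real.exp (-(ε * ‖x‖)) := by
            have heq2 : ∫ x in C, ‖y‖ ^ m * ((m.factorial : ℝ))⁻¹ * (‖x‖ ^ m *
                Real.exp (-(ε * ‖x‖))) =
                (‖y‖ ^ m * ((m.factorial : ℝ))⁻¹) •
                  ∫ x in C, ‖x‖ ^ m * Real.exp (-(ε * ‖x‖)) := by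
              rw [← integral_smul]
              exact integral_congr_ae (Filter.Eventually.of_forall fun x => rfl)
            rw [heq2]
            rfl
        _ ≤ ‖y‖ ^ m * ((m.factorial : ℝ))⁻¹ * ((2/ε) ^ m * (m.factorial : ℝ) * A) :=
            mul_le_mul_of_nonneg_left (hmaj m) (by positivity)
        _ = (2 * ‖y‖ / ε) ^ m * A := by
            rw [show (2 * ‖y‖ / ε : ℝ) = ‖y‖ * (2/ε) by ring, mul_pow]
            field_simp
    have hsum : Summable fun m : ℕ => ∫ x in C, ‖Fy m x‖ :=
      Summable.of_nonneg_of_le (fun m => integral_nonneg fun x => norm_nonneg _) hbound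
        ((summable_geometric_of_lt_one hq0 hq1).mul_right A)
    have hHasSum := MeasureTheory.hasSum_integral_of_summable_integral_norm
      (μ := volume.restrict C) hFy_int hsum
    -- identify the sum of the series
    have htsum : ∀ x : EuclideanSpace ℝ (Fin (n+1)),
        ∑' m : ℕ, Fy m x = Real.exp (-⟪x, v₀ + y⟫) := by
      intro x
      have h2 : ∑' m : ℕ, ((-⟪x, y⟫) ^ m / (m.factorial : ℝ)) = Real.exp (-⟪x, y⟫) := by
        rw [Real.exp_eq_exp_ℝ, NormedSpace.exp_eq_tsum_div]
      calc ∑' m : ℕ, Fy m x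
          = Real.exp (-⟪x, v₀⟫) * ∑' m : ℕ, ((-⟪x, y⟫) ^ m / (m.factorial : ℝ)) :=
            tsum_mul_left
        _ = Real.exp (-⟪x, v₀⟫) * Real.exp (-⟪x, y⟫) := by rw [h2]
        _ = Real.exp (-⟪x, v₀ + y⟫) := by
            rw [← Real.exp_add, ← neg_add, inner_add_right]
    have hval : (∫ x in C, ∑' m : ℕ, Fy m x) = ∫ x in C, Real.exp (-⟪x, v₀ + y⟫) :=
      integral_congr_ae (Filter.Eventually.of_forall fun x => htsum x)
    rw [hval] at hHasSum
    simp only [happ]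
    exact hHasSum
  exact ⟨p, ENNReal.ofReal (ε/4), hball⟩

end Analytic

section StrictConvex

variable {n : ℕ} {C : Set (EuclideanSpace ℝ (Fin (n+1)))}

lemma integrableOn_exp_dual (hCo : IsOpen C) (hCc : IsCone C)
    {u : EuclideanSpace ℝ (Fin (n+1))} (hu : u ∈ DualCone C) :
    IntegrableOn (fun x => Real.exp (-⟪x, u⟫)) C volume := by
  obtain ⟨δ, hδ, hcu⟩ := DualCone.exists_coercive hCc hu
  refine Integrable.mono' ((integrable_pow_mul_exp_neg n 0 hδ).integrableOn)
    ((Real.continuous_exp.comp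
      (continuous_id.inner continuous_const).neg).aestronglyMeasurable.restrict) ?_
  refine (ae_restrict_iff' hCo.measurableSet).2 (Filter.Eventually.of_forall fun x hx => ?_)
  rw [Real.norm_eq_abs, abs_of_pos (Real.exp_pos _), pow_zero, one_mul]
  exact Real.exp_le_exp.2 (by have := hcu x (subset_closure hx); linarith)

lemma strictConvexOn_laplace (hCo : IsOpen C) (hCc : IsCone C) (hsharp : IsSharp C)
    (hne : C.Nonempty) :
    StrictConvexOn ℝ (DualCone C) (fun v => ∫ x in C, Real.exp (-⟪x, v⟫)) := by
  refine ⟨DualCone.convex, ?_⟩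
  intro v hv w hw hvw a b ha hb hab
  have hm : a • v + b • w ∈ DualCone C := DualCone.convex hv hw ha.le hb.le hab
  have hiv := integrableOn_exp_dual hCo hCc hv
  have hiw := integrableOn_exp_dual hCo hCc hw
  have him := integrableOn_exp_dual hCo hCc hm
  have harg : ∀ x : EuclideanSpace ℝ (Fin (n+1)),
      -⟪x, a • v + b • w⟫ = a * (-⟪x, v⟫) + b * (-⟪x, w⟫) := by
    intro x
    rw [inner_add_right, real_inner_smul_right, real_inner_smul_right]
    ring
  have hpt : ∀ x : EuclideanSpace ℝ (Fin (n+1)),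
      Real.exp (-⟪x, a • v + b • w⟫) ≤
        a * Real.exp (-⟪x, v⟫) + b * Real.exp (-⟪x, w⟫) := by
    intro x
    have h := convexOn_exp.2 (Set.mem_univ (-⟪x, v⟫)) (Set.mem_univ (-⟪x, w⟫))
      ha.le hb.le hab
    rw [harg x]
    simpa [smul_eq_mul] using h
  set D : EuclideanSpace ℝ (Fin (n+1)) → ℝ := fun x =>
    a * Real.exp (-⟪x, v⟫) + b * Real.exp (-⟪x, w⟫) - Real.exp (-⟪x, a • v + b • w⟫)
    with hD
  have hDint : IntegrableOn D C volume :=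
    ((hiv.const_mul a).add (hiw.const_mul b)).sub him
  -- the set where the inequality is strict
  have hvw' : v - w ≠ 0 := sub_ne_zero.2 hvw
  have hSopen : IsOpen (C ∩ {x : EuclideanSpace ℝ (Fin (n+1)) | ⟪x, v - w⟫ ≠ 0}) := by
    refine hCo.inter ?_
    have : {x : EuclideanSpace ℝ (Fin (n+1)) | ⟪x, v - w⟫ ≠ 0} =
        (fun x : EuclideanSpace ℝ (Fin (n+1)) => (⟪x, v - w⟫ : ℝ)) ⁻¹' {(0:ℝ)}ᶜ := rfl
    rw [this]
    exact IsOpen.preimage (continuous_id.inner continuous_const) isOpen_compl_singleton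
  have hSne : (C ∩ {x : EuclideanSpace ℝ (Fin (n+1)) | ⟪x, v - w⟫ ≠ 0}).Nonempty := by
    obtain ⟨x, hx1, hx2⟩ := exists_inner_ne_zero hCo hne hvw'
    exact ⟨x, hx1, hx2⟩
  have hDpos : 0 < ∫ x in C, D x := by
    refine (setIntegral_pos_iff_support_of_nonneg_ae ?_ hDint).2 ?_
    · exact Filter.Eventually.of_forall fun x => sub_nonneg.2 (hpt x)
    · refine lt_of_lt_of_le (hSopen.measure_pos volume hSne) (measure_mono ?_)
      rintro x ⟨hxC, hxne⟩
      refine ⟨?_, hxC⟩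
      have hne2 : -⟪x, v⟫ ≠ -⟪x, w⟫ := by
        intro h
        refine hxne ?_
        show (⟪x, v - w⟫ : ℝ) = 0
        rw [inner_sub_right, neg_injective h, sub_self]
      have hstrict := strictConvexOn_exp.2 (Set.mem_univ (-⟪x, v⟫)) (Set.mem_univ (-⟪x, w⟫))
        hne2 ha hb hab
      simp only [smul_eq_mul] at hstrict
      have : 0 < D x := by
        rw [hD]
        simp only
        rw [harg x]
        linarith
      exact ne_of_gt this
  -- splitting the integral
  have hconst : ∀ (c : ℝ) (f : EuclideanSpace ℝ (Fin (n+1)) → ℝ),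
      IntegrableOn f C volume → ∫ x in C, c * f x = c * ∫ x in C, f x := by
    intro c f _
    have : ∫ x in C, c * f x = c • ∫ x in C, f x := by
      rw [← integral_smul]
      exact integral_congr_ae (Filter.Eventually.of_forall fun x => rfl)
    rw [this]
    rfl
  have hsplit : ∫ x in C, D x =
      a * (∫ x in C, Real.exp (-⟪x, v⟫)) + b * (∫ x in C, Real.exp (-⟪x, w⟫)) -
        ∫ x in C, Real.exp (-⟪x, a • v + b • w⟫) := by
    have e1 : ∫ x in C, D x =
        (∫ x in C, (a * Real.exp (-⟪x, v⟫) + b * Real.exp (-⟪x, w⟫))) -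
          ∫ x in C, Real.exp (-⟪x, a • v + b • w⟫) :=
      integral_sub ((hiv.const_mul a).add (hiw.const_mul b)) him
    have e2 : ∫ x in C, (a * Real.exp (-⟪x, v⟫) + b * Real.exp (-⟪x, w⟫)) =
        (∫ x in C, a * Real.exp (-⟪x, v⟫)) + ∫ x in C, b * Real.exp (-⟪x, w⟫) :=
      integral_add (hiv.const_mul a) (hiw.const_mul b)
    rw [e1, e2, hconst a _ hiv, hconst b _ hiw]
  rw [hsplit] at hDpos
  simp only [smul_eq_mul]
  linarith

end StrictConvex

/-- **Smoothness and strict convexity of the volume function.** For an open properly convex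
cone `C ⊂ ℝ^{n+1}`, the volume function `V(φ) = vol(C ∩ φ⁻¹((0,1]))` is smooth and
strictly convex on the dual cone `C*`. -/
theorem coneVolume_smooth_strictConvex (n : ℕ) (C : Set (EuclideanSpace ℝ (Fin (n+1))))
    (hCo : IsOpen C) (hCc : IsCone C) (hconv : Convex ℝ C) (hsharp : IsSharp C)
    (hne : C.Nonempty) :
    ContDiffOn ℝ (⊤ : ℕ∞) (coneVolume C) (DualCone C) ∧
      StrictConvexOn ℝ (DualCone C) (coneVolume C) := by
  have hfact : (0:ℝ) < (((n+1).factorial : ℝ)) := by exact_mod_cast (n+1).factorial_pos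
  have hrep : ∀ v ∈ DualCone C, coneVolume C v =
      (((n+1).factorial : ℝ))⁻¹ * ∫ x in C, Real.exp (-⟪x, v⟫) := by
    intro v hv
    rw [rep_lemma hCo hCc hsharp hne hv]
    field_simp
  have hana := analyticOnNhd_laplace hCo hCc
  have hconvex := strictConvexOn_laplace hCo hCc hsharp hne
  constructor
  · have h1 : ContDiffOn ℝ (⊤ : ℕ∞) (fun v => (((n+1).factorial : ℝ))⁻¹ *
        ∫ x in C, Real.exp (-⟪x, v⟫)) (DualCone C) :=
      contDiffOn_const.mul hana.contDiffOn_of_completeSpace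
    exact h1.congr fun v hv => hrep v hv
  · refine ⟨DualCone.convex, fun v hv w hw hvw a b ha hb hab => ?_⟩
    have hm : a • v + b • w ∈ DualCone C := DualCone.convex hv hw ha.le hb.le hab
    rw [hrep _ hm, hrep _ hv, hrep _ hw]
    have h2 := hconvex.2 hv hw hvw ha hb hab
    simp only [smul_eq_mul] at h2 ⊢
    have hfi : (0:ℝ) < (((n+1).factorial : ℝ))⁻¹ := by positivity
    nlinarith [h2]
end

section
/- Let Ω be an open bounded convex subset of R^n whose centroid is the origin and whose inertia tensor is the standard one (Q_Ω = x_1^2 + ... + x_n^2, i.e., ∫_Ω x_i x_j dvol is a fixed multiple of δ_{ij}). Then there is a constant K = K(n) > 1 depending only on n such that K^{-1}·[-1,1]^n ⊆ Ω ⊆ K·[-1,1]^n. -/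
/-!
Write `h` for the support function of `Ω` and `V` for its volume. Along a unit vector `u` the
linear form `⟪x, u⟫` has mean `0` and second moment `1` on `Ω`, so the Bhatia–Davis inequality
gives `1 ≤ h(u) h(-u) V`. Conversely, if `h(-u) ≤ h(u)`, shrinking `Ω` by the factor `1/3`
towards a point where `⟪x, u⟫` almost reaches `h(u)` gives a subset of volume `3⁻ⁿ V` on which
`⟪x, u⟫ ≥ h(u)/4`, whence `V h(u)² ≤ 16 · 3ⁿ`. So `Ω` contains a ball and lies in a ball whose
radii are `V^{-1/2}` up to dimensional constants; comparing their volumes with `V` pins `V`,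
and with it both radii, between constants depending only on `n`.
-/

open MeasureTheory Bornology Metric Set Module
open scoped RealInnerProductSpace

noncomputable def supportFunction {E : Type*} [NormedAddCommGroup E] [InnerProductSpace ℝ E]
    (s : Set E) (u : E) : ℝ :=
  sSup ((⟪·, u⟫) '' s)

section SupportFunction

variable {E : Type*} [NormedAddCommGroup E] [InnerProductSpace ℝ E] {s : Set E} {u x : E} {c : ℝ}

lemma bddAbove_image_inner (hs : IsBounded s) (u : E) : BddAbove ((⟪·, u⟫) '' s) := by
  obtain ⟨R, hR⟩ := hs.exists_norm_le
  refine ⟨R * ‖u‖, forall_mem_image.2 fun x hx => ?_⟩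
  exact (real_inner_le_norm x u).trans (mul_le_mul_of_nonneg_right (hR x hx) (norm_nonneg u))

lemma inner_le_supportFunction (hs : IsBounded s) (hx : x ∈ s) : ⟪x, u⟫ ≤ supportFunction s u :=
  le_csSup (bddAbove_image_inner hs u) (mem_image_of_mem _ hx)

lemma neg_supportFunction_neg_le_inner (hs : IsBounded s) (hx : x ∈ s) :
    -supportFunction s (-u) ≤ ⟪x, u⟫ := by
  have := inner_le_supportFunction (u := -u) hs hx
  rw [inner_neg_right] at this
  linarith

lemma neg_supportFunction_neg_le_supportFunction (hs : IsBounded s) (hne : s.Nonempty) :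
    -supportFunction s (-u) ≤ supportFunction s u :=
  let ⟨_, hx⟩ := hne
  (neg_supportFunction_neg_le_inner hs hx).trans (inner_le_supportFunction hs hx)

lemma supportFunction_le (hne : s.Nonempty) (h : ∀ x ∈ s, ⟪x, u⟫ ≤ c) : supportFunction s u ≤ c :=
  csSup_le (hne.image _) (forall_mem_image.2 h)

lemma exists_lt_inner_of_lt_supportFunction (hne : s.Nonempty) (h : c < supportFunction s u) :
    ∃ x ∈ s, c < ⟪x, u⟫ := by
  obtain ⟨_, ⟨x, hx, rfl⟩, hc⟩ := exists_lt_of_lt_csSup (hne.image _) h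
  exact ⟨x, hx, hc⟩

lemma subset_closedBall_of_supportFunction_le (hs : IsBounded s) {R : ℝ} (hR : 0 ≤ R)
    (h : ∀ u, ‖u‖ = 1 → supportFunction s u ≤ R) : s ⊆ closedBall 0 R := by
  intro x hx
  rw [mem_closedBall_zero_iff]
  rcases eq_or_ne x 0 with rfl | hx0
  · simpa using hR
  calc ‖x‖ = ⟪x, ‖x‖⁻¹ • x⟫ := by
        rw [real_inner_smul_right, real_inner_self_eq_norm_sq]
        field_simp [norm_ne_zero_iff.2 hx0]
    _ ≤ supportFunction s (‖x‖⁻¹ • x) := inner_le_supportFunction hs hx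
    _ ≤ R := h _ (norm_smul_inv_norm hx0)

lemma ball_subset_of_le_supportFunction [CompleteSpace E] (ho : IsOpen s) (hc : Convex ℝ s)
    (hne : s.Nonempty) {r : ℝ} (h : ∀ u, ‖u‖ = 1 → r ≤ supportFunction s u) : ball 0 r ⊆ s := by
  intro x hx
  by_contra hxs
  obtain ⟨f, hf⟩ := geometric_hahn_banach_open_point hc ho hxs
  set v := (InnerProductSpace.toDual ℝ E).symm f
  have hfv : ∀ y, f y = ⟪v, y⟫ := fun y =>
    (InnerProductSpace.toDual_symm_apply (𝕜 := ℝ) (E := E)).symm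
  have hv : v ≠ 0 := by
    rintro hv
    obtain ⟨y, hy⟩ := hne
    simpa [hfv, hv] using hf y hy
  have hsupp : supportFunction s (‖v‖⁻¹ • v) ≤ ‖x‖ := supportFunction_le hne fun z hz => by
    rw [real_inner_smul_right, real_inner_comm, inv_mul_le_iff₀ (norm_pos_iff.2 hv)]
    have := hf z hz
    rw [hfv, hfv] at this
    exact this.le.trans (real_inner_le_norm v x)
  linarith [h (‖v‖⁻¹ • v) (norm_smul_inv_norm hv), mem_ball_zero_iff.1 hx]

end SupportFunction

lemma setIntegral_sq_le_of_setIntegral_eq_zero {α : Type*} [MeasurableSpace α] {μ : Measure α}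
    {s : Set α} {f : α → ℝ} {a b : ℝ} (hs : MeasurableSet s) (hμs : μ s ≠ ⊤)
    (hf : IntegrableOn f s μ) (hf2 : IntegrableOn (fun x => f x ^ 2) s μ)
    (h0 : ∫ x in s, f x ∂μ = 0) (ha : ∀ x ∈ s, f x ≤ a) (hb : ∀ x ∈ s, -b ≤ f x) :
    ∫ x in s, f x ^ 2 ∂μ ≤ a * b * μ.real s := by
  have hconst : IntegrableOn (fun _ => a * b) s μ := integrableOn_const hμs
  -- Bhatia–Davis: integrate `(a - f) (f + b) ≥ 0`.
  calc ∫ x in s, f x ^ 2 ∂μ ≤ ∫ x in s, (a * b + (a - b) * f x) ∂μ :=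
        setIntegral_mono_on hf2 (hconst.add (hf.const_mul _)) hs fun x hx => by
          nlinarith [ha x hx, hb x hx]
    _ = a * b * μ.real s := by
        rw [integral_add hconst (hf.const_mul _), setIntegral_const, integral_const_mul, h0,
          smul_eq_mul, mul_zero, add_zero, mul_comm]

lemma Bornology.IsBounded.integrableOn_of_continuous {X F : Type*} [MeasurableSpace X]
    [MetricSpace X] [ProperSpace X] [OpensMeasurableSpace X] [NormedAddCommGroup F]
    {μ : Measure X} [IsFiniteMeasureOnCompacts μ] {s : Set X} {f : X → F}
    (hs : IsBounded s) (hf : Continuous f) : IntegrableOn f s μ :=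
  (hf.continuousOn.integrableOn_compact hs.isCompact_closure).mono_set subset_closure

section Haar

variable {E : Type*} [NormedAddCommGroup E] [InnerProductSpace ℝ E] [FiniteDimensional ℝ E]
  [MeasurableSpace E] [BorelSpace E] (μ : Measure E) [μ.IsAddHaarMeasure]

lemma sq_mul_measureReal_le_of_convex {s : Set E} {p u : E} {b c : ℝ}
    (hs : Convex ℝ s) (hsm : MeasurableSet s) (hμs : μ s ≠ ⊤) (hp : p ∈ s)
    (hb : ∀ x ∈ s, -b ≤ ⟪x, u⟫) (hc : 0 ≤ c) (hcp : 3 * c + b ≤ 2 * ⟪p, u⟫)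
    (hint : IntegrableOn (fun x => ⟪x, u⟫ ^ 2) s μ) :
    c ^ 2 * μ.real s ≤ 3 ^ finrank ℝ E * ∫ x in s, ⟪x, u⟫ ^ 2 ∂μ := by
  set A := AffineMap.homothety p (1 / 3 : ℝ) '' s
  have hAs : A ⊆ s := by
    rintro _ ⟨x, hx, rfl⟩
    rw [AffineMap.homothety_eq_lineMap]
    exact hs.lineMap_mem hp hx ⟨by norm_num, by norm_num⟩
  have hAm : MeasurableSet A :=
    hsm.image_of_continuousOn_injOn (AffineMap.homothety_continuous _ _).continuousOn
      (AffineMap.homothety_injective _ (by norm_num)).injOn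
  have hμA : μ.real A = (3 ^ finrank ℝ E)⁻¹ * μ.real s := by
    simp [A, measureReal_def, Measure.addHaar_image_homothety, ENNReal.toReal_mul]
  have hcA : ∀ y ∈ A, c ^ 2 ≤ ⟪y, u⟫ ^ 2 := by
    rintro _ ⟨x, hx, rfl⟩
    have hy : ⟪AffineMap.homothety p (1 / 3 : ℝ) x, u⟫ = ⟪x, u⟫ / 3 + 2 * ⟪p, u⟫ / 3 := by
      rw [AffineMap.homothety_apply, vsub_eq_sub, vadd_eq_add, inner_add_left,
        real_inner_smul_left, inner_sub_left]
      ring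
    nlinarith [hb x hx]
  calc c ^ 2 * μ.real s = 3 ^ finrank ℝ E * (c ^ 2 * μ.real A) := by
        rw [hμA]
        field_simp
    _ ≤ 3 ^ finrank ℝ E * ∫ x in A, ⟪x, u⟫ ^ 2 ∂μ := by
        gcongr
        exact setIntegral_ge_of_const_le_real hAm (measure_ne_top_of_subset hAs hμs) hcA
          (hint.mono_set hAs)
    _ ≤ 3 ^ finrank ℝ E * ∫ x in s, ⟪x, u⟫ ^ 2 ∂μ := by
        gcongr ?_ * ?_
        exact setIntegral_mono_set hint (ae_of_all _ fun _ => sq_nonneg _) hAs.eventuallyLE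

end Haar

lemma le_max_one_of_pow_le {x B : ℝ} {m : ℕ} (hm : m ≠ 0) (h : x ^ m ≤ B) :
    x ≤ max 1 B := by
  rcases le_total x 1 with hx1 | hx1
  · exact hx1.trans (le_max_left _ _)
  · exact ((le_self_pow₀ hx1 hm).trans h).trans (le_max_right _ _)

lemma min_one_le_of_le_pow {x B : ℝ} {m : ℕ} (hx : 0 ≤ x) (hm : m ≠ 0) (h : B ≤ x ^ m) :
    min 1 B ≤ x := by
  rcases le_total 1 x with hx1 | hx1
  · exact (min_le_left _ _).trans hx1
  · exact (min_le_right _ _).trans (h.trans (pow_le_of_le_one hx hx1 hm))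

/-- Unlike the usual isotropic position, the volume is not normalized to `1`; instead the inertia
tensor is the identity. -/
structure IsIsotropicConvexBody {E : Type*} [NormedAddCommGroup E] [InnerProductSpace ℝ E]
    [MeasurableSpace E] (μ : Measure E) (s : Set E) : Prop where
  isOpen : IsOpen s
  isBounded : IsBounded s
  convex : Convex ℝ s
  nonempty : s.Nonempty
  setIntegral_id : ∫ x in s, x ∂μ = 0
  setIntegral_inner_sq : ∀ u, ∫ x in s, ⟪x, u⟫ ^ 2 ∂μ = ‖u‖ ^ 2

namespace IsIsotropicConvexBody

variable {E : Type*} [NormedAddCommGroup E] [InnerProductSpace ℝ E] [FiniteDimensional ℝ E]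
  [MeasurableSpace E] {μ : Measure E} [μ.IsAddHaarMeasure] {s : Set E} {u : E}

lemma measureReal_pos (hK : IsIsotropicConvexBody μ s) : 0 < μ.real s :=
  ENNReal.toReal_pos (hK.isOpen.measure_pos μ hK.nonempty).ne' hK.isBounded.measure_lt_top.ne

variable [BorelSpace E]

lemma setIntegral_inner (hK : IsIsotropicConvexBody μ s) (u : E) : ∫ x in s, ⟪x, u⟫ ∂μ = 0 := by
  simp_rw [real_inner_comm u]
  rw [integral_inner (hK.isBounded.integrableOn_of_continuous (f := fun x => x) continuous_id) u,
    hK.setIntegral_id, inner_zero_right]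

lemma one_le_supportFunction_mul_supportFunction_neg_mul (hK : IsIsotropicConvexBody μ s)
    (hu : ‖u‖ = 1) : 1 ≤ supportFunction s u * supportFunction s (-u) * μ.real s := by
  have h := setIntegral_sq_le_of_setIntegral_eq_zero hK.isOpen.measurableSet
    hK.isBounded.measure_lt_top.ne (hK.isBounded.integrableOn_of_continuous (by fun_prop))
    (hK.isBounded.integrableOn_of_continuous (by fun_prop)) (hK.setIntegral_inner u)
    (fun x hx => inner_le_supportFunction hK.isBounded hx)
    (fun x hx => neg_supportFunction_neg_le_inner hK.isBounded hx)
  rwa [hK.setIntegral_inner_sq, hu, one_pow] at h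

/-- The homothetic copy of `s` by ratio `1/3` towards a point where `⟪·, u⟫` is at least
`7/8` of its supremum `a` lies in `s`, and `⟪·, u⟫ ≥ a / 4` on it. -/
lemma measureReal_mul_supportFunction_sq_le_of_neg_le (hK : IsIsotropicConvexBody μ s)
    (hu : ‖u‖ = 1) (hle : supportFunction s (-u) ≤ supportFunction s u) :
    μ.real s * supportFunction s u ^ 2 ≤ 16 * 3 ^ finrank ℝ E := by
  set a := supportFunction s u
  have ha : 0 ≤ a := by
    linarith [neg_supportFunction_neg_le_supportFunction hK.isBounded hK.nonempty (u := u)]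
  rcases ha.eq_or_lt with ha0 | hapos
  · rw [← ha0, zero_pow two_ne_zero, mul_zero]
    positivity
  obtain ⟨p, hp, hpu⟩ :=
    exists_lt_inner_of_lt_supportFunction hK.nonempty (show 7 / 8 * a < a by linarith)
  have h := sq_mul_measureReal_le_of_convex μ hK.convex hK.isOpen.measurableSet
    hK.isBounded.measure_lt_top.ne hp (b := a) (c := a / 4)
    (fun x hx => (neg_supportFunction_neg_le_inner hK.isBounded hx).trans' (by linarith))
    (by positivity) (by linarith) (hK.isBounded.integrableOn_of_continuous (by fun_prop))
  rw [hK.setIntegral_inner_sq, hu, one_pow, mul_one] at h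
  linarith

lemma measureReal_mul_supportFunction_sq_le (hK : IsIsotropicConvexBody μ s) (hu : ‖u‖ = 1) :
    μ.real s * supportFunction s u ^ 2 ≤ 16 * 3 ^ finrank ℝ E := by
  rcases le_total (supportFunction s (-u)) (supportFunction s u) with hle | hle
  · exact hK.measureReal_mul_supportFunction_sq_le_of_neg_le hu hle
  have hsq : supportFunction s u ^ 2 ≤ supportFunction s (-u) ^ 2 :=
    sq_le_sq' (neg_supportFunction_neg_le_supportFunction hK.isBounded hK.nonempty) hle
  calc μ.real s * supportFunction s u ^ 2 ≤ μ.real s * supportFunction s (-u) ^ 2 :=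
        mul_le_mul_of_nonneg_left hsq hK.measureReal_pos.le
    _ ≤ 16 * 3 ^ finrank ℝ E :=
        hK.measureReal_mul_supportFunction_sq_le_of_neg_le (by rwa [norm_neg])
          (by rwa [neg_neg])

lemma supportFunction_mul_sqrt_le (hK : IsIsotropicConvexBody μ s) (hu : ‖u‖ = 1) :
    supportFunction s u * √(μ.real s) ≤ 4 * 3 ^ finrank ℝ E := by
  refine le_of_sq_le_sq ?_ (by positivity)
  have h3 : (1 : ℝ) ≤ 3 ^ finrank ℝ E := one_le_pow₀ (by norm_num)
  rw [mul_pow, Real.sq_sqrt hK.measureReal_pos.le]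
  nlinarith [hK.measureReal_mul_supportFunction_sq_le hu]

lemma inv_le_supportFunction_mul_sqrt (hK : IsIsotropicConvexBody μ s) (hu : ‖u‖ = 1) :
    (4 * 3 ^ finrank ℝ E)⁻¹ ≤ supportFunction s u * √(μ.real s) := by
  have hV := hK.measureReal_pos
  have hprod := hK.one_le_supportFunction_mul_supportFunction_neg_mul hu
  have hneg := hK.supportFunction_mul_sqrt_le (u := -u) (by rwa [norm_neg])
  have hpos : 0 < supportFunction s u := by
    by_contra! h0
    have : supportFunction s u * supportFunction s (-u) ≤ 0 := mul_nonpos_of_nonpos_of_nonneg h0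
      (by linarith [neg_supportFunction_neg_le_supportFunction hK.isBounded hK.nonempty (u := u)])
    nlinarith
  rw [inv_le_iff_one_le_mul₀ (by positivity)]
  calc 1 ≤ supportFunction s u * supportFunction s (-u) * μ.real s := hprod
    _ = (supportFunction s u * √(μ.real s)) * (supportFunction s (-u) * √(μ.real s)) := by
        rw [mul_mul_mul_comm, Real.mul_self_sqrt hV.le, mul_assoc]
    _ ≤ (supportFunction s u * √(μ.real s)) * (4 * 3 ^ finrank ℝ E) := by gcongr

lemma ball_subset (hK : IsIsotropicConvexBody μ s) :
    ball 0 ((4 * 3 ^ finrank ℝ E)⁻¹ / √(μ.real s)) ⊆ s :=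
  ball_subset_of_le_supportFunction hK.isOpen hK.convex hK.nonempty fun _ hu =>
    (div_le_iff₀ (Real.sqrt_pos.2 hK.measureReal_pos)).2 (hK.inv_le_supportFunction_mul_sqrt hu)

lemma subset_closedBall (hK : IsIsotropicConvexBody μ s) :
    s ⊆ closedBall 0 (4 * 3 ^ finrank ℝ E / √(μ.real s)) :=
  subset_closedBall_of_supportFunction_le hK.isBounded (by positivity) fun _ hu =>
    (le_div_iff₀ (Real.sqrt_pos.2 hK.measureReal_pos)).2 (hK.supportFunction_mul_sqrt_le hu)

lemma sqrt_measureReal_le (hK : IsIsotropicConvexBody μ s) :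
    √(μ.real s) ≤ max 1 ((4 * 3 ^ finrank ℝ E) ^ finrank ℝ E * μ.real (ball 0 1)) := by
  set d := finrank ℝ E
  set W := √(μ.real s)
  have hW : 0 < W := Real.sqrt_pos.2 hK.measureReal_pos
  have hV : μ.real s ≤ (4 * 3 ^ d / W) ^ d * μ.real (ball 0 1) := by
    rw [← Measure.addHaar_real_closedBall μ 0 (by positivity)]
    exact measureReal_mono hK.subset_closedBall measure_closedBall_lt_top.ne
  refine le_max_one_of_pow_le (m := d + 2) (by omega) ?_
  calc W ^ (d + 2) = W ^ d * μ.real s := by rw [pow_add, Real.sq_sqrt hK.measureReal_pos.le]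
    _ ≤ W ^ d * ((4 * 3 ^ d / W) ^ d * μ.real (ball 0 1)) := by gcongr
    _ = (4 * 3 ^ d) ^ d * μ.real (ball 0 1) := by
        rw [div_pow]
        field_simp

lemma min_le_sqrt_measureReal (hK : IsIsotropicConvexBody μ s) :
    min 1 (μ.real (ball 0 1) / (4 * 3 ^ finrank ℝ E) ^ finrank ℝ E) ≤ √(μ.real s) := by
  set d := finrank ℝ E
  set W := √(μ.real s)
  have hW : 0 < W := Real.sqrt_pos.2 hK.measureReal_pos
  have hr : 0 < (4 * 3 ^ d)⁻¹ / W := by positivity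
  have hV : ((4 * 3 ^ d)⁻¹ / W) ^ d * μ.real (ball 0 1) ≤ μ.real s := by
    rw [measureReal_def, measureReal_def, ← ENNReal.toReal_ofReal (pow_nonneg hr.le d),
      ← ENNReal.toReal_mul, ← Measure.addHaar_ball_of_pos μ 0 hr]
    exact ENNReal.toReal_mono hK.isBounded.measure_lt_top.ne (measure_mono hK.ball_subset)
  refine min_one_le_of_le_pow hW.le (m := d + 2) (by omega) ?_
  calc μ.real (ball 0 1) / (4 * 3 ^ d) ^ d
      = W ^ d * (((4 * 3 ^ d)⁻¹ / W) ^ d * μ.real (ball 0 1)) := by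
        rw [div_pow, inv_pow]
        field_simp
    _ ≤ W ^ d * μ.real s := by gcongr
    _ = W ^ (d + 2) := by rw [pow_add, Real.sq_sqrt hK.measureReal_pos.le]

end IsIsotropicConvexBody

theorem exists_ball_subset_and_subset_closedBall_of_isIsotropicConvexBody {E : Type*}
    [NormedAddCommGroup E] [InnerProductSpace ℝ E] [FiniteDimensional ℝ E] [MeasurableSpace E]
    [BorelSpace E] (μ : Measure E) [μ.IsAddHaarMeasure] :
    ∃ r R : ℝ, 0 < r ∧ 0 < R ∧
      ∀ s, IsIsotropicConvexBody μ s → ball 0 r ⊆ s ∧ s ⊆ closedBall 0 R := by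
  set a : ℝ := 4 * 3 ^ finrank ℝ E
  have hω : 0 < μ.real (ball 0 1) :=
    ENNReal.toReal_pos (measure_ball_pos μ 0 one_pos).ne' measure_ball_lt_top.ne
  have hmin : 0 < min 1 (μ.real (ball 0 1) / a ^ finrank ℝ E) := by positivity
  refine ⟨a⁻¹ / max 1 (a ^ finrank ℝ E * μ.real (ball 0 1)),
    a / min 1 (μ.real (ball 0 1) / a ^ finrank ℝ E), by positivity, by positivity,
    fun s hK => ⟨?_, ?_⟩⟩
  · refine (ball_subset_ball ?_).trans hK.ball_subset
    exact div_le_div_of_nonneg_left (by positivity) (Real.sqrt_pos.2 hK.measureReal_pos)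
      hK.sqrt_measureReal_le
  · refine hK.subset_closedBall.trans (closedBall_subset_closedBall ?_)
    exact div_le_div_of_nonneg_left (by positivity) hmin hK.min_le_sqrt_measureReal

namespace EuclideanSpace

variable {ι : Type*} [Fintype ι]

lemma norm_le_sqrt_card_mul {x : EuclideanSpace ℝ ι} {ε : ℝ} (hε : 0 ≤ ε)
    (hx : ∀ i, |x i| ≤ ε) : ‖x‖ ≤ √(Fintype.card ι) * ε := by
  rw [EuclideanSpace.norm_eq, ← Real.sqrt_sq hε, ← Real.sqrt_mul (Nat.cast_nonneg _)]
  gcongr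
  calc ∑ i, ‖x i‖ ^ 2 ≤ ∑ _i : ι, ε ^ 2 := by
        gcongr with i
        rw [Real.norm_eq_abs]
        exact hx i
    _ = Fintype.card ι * ε ^ 2 := by simp

lemma setIntegral_inner_sq_eq_norm_sq [MeasurableSpace (EuclideanSpace ℝ ι)]
    {μ : Measure (EuclideanSpace ℝ ι)} {s : Set (EuclideanSpace ℝ ι)} [DecidableEq ι]
    (hint : ∀ i j, IntegrableOn (fun x : EuclideanSpace ℝ ι => x i * x j) s μ)
    (h2 : ∀ i j, ∫ x in s, x i * x j ∂μ = if i = j then 1 else 0) (u : EuclideanSpace ℝ ι) :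
    ∫ x in s, ⟪x, u⟫ ^ 2 ∂μ = ‖u‖ ^ 2 := by
  have hexpand : ∀ x : EuclideanSpace ℝ ι,
      ⟪x, u⟫ ^ 2 = ∑ i, ∑ j, u i * u j * (x i * x j) := by
    intro x
    simp only [PiLp.inner_apply, RCLike.inner_apply, conj_trivial, sq, Finset.sum_mul_sum]
    exact Finset.sum_congr rfl fun i _ => Finset.sum_congr rfl fun j _ => by ring
  simp_rw [hexpand]
  rw [integral_finsetSum _ fun i _ => integrable_finsetSum _ fun j _ => (hint i j).const_mul _]
  simp_rw [integral_finsetSum _ fun j _ => (hint _ j).const_mul _, integral_const_mul, h2]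
  rw [EuclideanSpace.norm_sq_eq]
  simp [sq]

end EuclideanSpace

/-- **Uniform box estimate (John's theorem normalization).** There is a constant
`K = K(n) > 1` depending only on the dimension such that every bounded open convex
`Ω ⊂ ℝ^n` with centroid at the origin and standard (isotropic) inertia tensor
(`∫_Ω x_i x_j dvol = δ_{ij}`) satisfies `K⁻¹·[-1,1]^n ⊆ Ω ⊆ K·[-1,1]^n`. -/
theorem uniform_box_estimate (n : ℕ) :
    ∃ K : ℝ, 1 < K ∧
      ∀ Ω : Set (EuclideanSpace ℝ (Fin n)),
        IsOpen Ω → Bornology.IsBounded Ω → Convex ℝ Ω → Ω.Nonempty →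
        (∫ x in Ω, x ∂volume) = 0 →
        (∀ i j : Fin n, (∫ x in Ω, x i * x j ∂volume) = if i = j then 1 else 0) →
        ((∀ x : EuclideanSpace ℝ (Fin n), (∀ i, |x i| ≤ K⁻¹) → x ∈ Ω) ∧
          (∀ x ∈ Ω, ∀ i, |x i| ≤ K)) := by
  obtain ⟨r, R, hr, hR, hsandwich⟩ :=
    exists_ball_subset_and_subset_closedBall_of_isIsotropicConvexBody
      (volume : Measure (EuclideanSpace ℝ (Fin n)))
  have hK : 1 < R + √n / r + 1 := by linarith [div_nonneg (Real.sqrt_nonneg n) hr.le]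
  refine ⟨R + √n / r + 1, hK, fun Ω hopen hbdd hconv hne hcentroid hinertia => ?_⟩
  obtain ⟨hball, hclosedBall⟩ := hsandwich Ω
    { isOpen := hopen, isBounded := hbdd, convex := hconv, nonempty := hne,
      setIntegral_id := hcentroid
      setIntegral_inner_sq := EuclideanSpace.setIntegral_inner_sq_eq_norm_sq
        (fun i j => hbdd.integrableOn_of_continuous (by fun_prop)) hinertia }
  refine ⟨fun x hx => hball (mem_ball_zero_iff.2 ?_), fun x hx i => ?_⟩
  · calc ‖x‖ ≤ √n * (R + √n / r + 1)⁻¹ := by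
          simpa using EuclideanSpace.norm_le_sqrt_card_mul (by positivity) hx
      _ < r := by
          rw [← div_eq_mul_inv, div_lt_iff₀ (by linarith), mul_add, mul_add,
            mul_div_cancel₀ _ hr.ne']
          nlinarith [mul_pos hr hR]
  · calc |x i| ≤ ‖x‖ := by simpa using PiLp.norm_apply_le x i
      _ ≤ R := mem_closedBall_zero_iff.1 (hclosedBall hx)
      _ ≤ R + √n / r + 1 := by linarith [div_nonneg (Real.sqrt_nonneg n) hr.le]
end
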